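/- For every pair (α,β) in the set {(0,6),(1,5),(3,3),(4,2),(5,1)}, the braid b³_{α,β} = σ_2^{−1} σ_1^{−1} σ_2^2 σ_1 σ_2^{−β} σ_1^{−1} σ_2 σ_1^{−α} Δ_3^2 in the braid group B_3 is not quasipositive. -/
import Mathlib


open FreeGroup in
/-- The braid relations on `n` generators. -/
def braidRels (n : ℕ) : Set (FreeGroup (Fin n)) :=
  {r | (∃ i j : Fin n, (i : ℕ) + 1 = (j : ℕ) ∧
          r = of i * of j * of i * (of j * of i * of j)⁻¹) ∨
       (∃ i j : Fin n, (i : ℕ) + 2 ≤ (j : ℕ) ∧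
          r = of i * of j * (of j * of i)⁻¹)}

/-- The braid group `B_{n+1}`, presented with `n` generators `σ_1, …, σ_n`
(so `Braid (m - 1)` is the braid group on `m` strands). -/
def Braid (n : ℕ) : Type := PresentedGroup (braidRels n)

instance (n : ℕ) : Group (Braid n) :=
  inferInstanceAs (Group (PresentedGroup (braidRels n)))

/-- The Artin generator `σ_{i+1}` of the braid group (indices start at `0`,
so `σ 0` is the generator usually written `σ_1`). -/
def σ {n : ℕ} (i : Fin n) : Braid n := PresentedGroup.of i

/-- A braid is quasipositive if it can be written as a (possibly empty) product
of conjugates `w σ_1 w⁻¹` of the first Artin generator. -/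
def Quasipositive {n : ℕ} [NeZero n] (b : Braid n) : Prop :=
  ∃ l : List (Braid n), b = (l.map fun w => w * σ 0 * w⁻¹).prod


/-- `σ_1` in the braid group `B_3`. -/
def σ₁ : Braid 2 := σ 0
/-- `σ_2` in the braid group `B_3`. -/
def σ₂ : Braid 2 := σ 1
/-- The Garside element `Δ_3 = σ_1 σ_2 σ_1` of `B_3`. -/
def Δ₃ : Braid 2 := σ₁ * σ₂ * σ₁


namespace B3QP

open Matrix

abbrev M2 := Matrix (Fin 2) (Fin 2) ℤ

def uA : M2ˣ := ⟨!![1,1;0,1], !![1,-1;0,1], by decide, by decide⟩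
def uB : M2ˣ := ⟨!![1,0;-1,1], !![1,0;1,1], by decide, by decide⟩

def ρf : Fin 2 → M2ˣ := ![uA, uB]

lemma ρrels : ∀ r ∈ braidRels 2, FreeGroup.lift ρf r = 1 := by
  rintro r (⟨i, j, hij, rfl⟩ | ⟨i, j, hij, rfl⟩)
  · have hi : i = 0 := by omega
    have hj : j = 1 := by omega
    subst hi hj
    simp only [_root_.map_mul, map_inv, FreeGroup.lift_apply_of, mul_inv_eq_one]
    show ρf 0 * ρf 1 * ρf 0 = ρf 1 * ρf 0 * ρf 1
    simp only [ρf]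
    ext : 1
    decide
  · exfalso
    have := j.isLt
    omega

def ρ : Braid 2 →* M2ˣ := PresentedGroup.toGroup ρrels

lemma ρσ₁ : ρ σ₁ = uA := PresentedGroup.toGroup.of ρrels
lemma ρσ₂ : ρ σ₂ = uB := PresentedGroup.toGroup.of ρrels

def φf : Fin 2 → Multiplicative ℤ := fun _ => Multiplicative.ofAdd 1

lemma φrels : ∀ r ∈ braidRels 2, FreeGroup.lift φf r = 1 := by
  rintro r (⟨i, j, hij, rfl⟩ | ⟨i, j, hij, rfl⟩)
  · simp only [_root_.map_mul, map_inv, FreeGroup.lift_apply_of, mul_inv_eq_one, φf]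
  · exfalso
    have := j.isLt
    omega

def φ : Braid 2 →* Multiplicative ℤ := PresentedGroup.toGroup φrels

lemma φσ₁ : φ σ₁ = Multiplicative.ofAdd 1 := PresentedGroup.toGroup.of φrels
lemma φσ₂ : φ σ₂ = Multiplicative.ofAdd 1 := PresentedGroup.toGroup.of φrels

lemma conj_comm {G : Type*} [CommGroup G] (a b : G) : a * b * a⁻¹ = b := by
  rw [mul_comm a b, mul_inv_cancel_right]

lemma φ_prod (l : List (Braid 2)) :
    φ (l.map fun w => w * σ 0 * w⁻¹).prod = Multiplicative.ofAdd (l.length : ℤ) := by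
  induction l with
  | nil => simp
  | cons w t ih =>
      simp only [List.map_cons, List.prod_cons, _root_.map_mul, map_inv, ih, List.length_cons]
      rw [show σ 0 = σ₁ from rfl, φσ₁]
      rw [conj_comm (φ w), ← ofAdd_add]
      congr 1
      push_cast
      ring

end B3QP

open B3QP in
theorem b3_not_quasipositive :
    ∀ α β : ℕ, (α, β) ∈ ({(0,6),(1,5),(3,3),(4,2),(5,1)} : Set (ℕ × ℕ)) →
      ¬ Quasipositive
        (σ₂⁻¹ * σ₁⁻¹ * σ₂ ^ 2 * σ₁ * (σ₂ ^ β)⁻¹ * σ₁⁻¹ * σ₂ * (σ₁ ^ α)⁻¹ * Δ₃ ^ 2) := by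
  intro α β hmem ⟨l, hl⟩
  -- exponent sum of b is 1
  have hφb : φ (σ₂⁻¹ * σ₁⁻¹ * σ₂ ^ 2 * σ₁ * (σ₂ ^ β)⁻¹ * σ₁⁻¹ * σ₂ * (σ₁ ^ α)⁻¹ * Δ₃ ^ 2)
      = Multiplicative.ofAdd ((7 : ℤ) - α - β) := by
    simp only [Δ₃, _root_.map_mul, map_inv, map_pow, φσ₁, φσ₂, ← ofAdd_add, ← ofAdd_nsmul,
      ← ofAdd_neg]
    congr 1
    push_cast
    ring
  have hαβ : (7 : ℤ) - α - β = 1 := by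
    rcases hmem with h | h | h | h | h <;>
      (simp only [Set.mem_singleton_iff, Prod.mk.injEq] at h; omega)
  have hlen : (l.length : ℤ) = 1 :=
    Multiplicative.ofAdd.injective (by rw [← φ_prod l, ← hl, hφb, hαβ])
  have hlen1 : l.length = 1 := by omega
  obtain ⟨w, hw⟩ := List.length_eq_one_iff.mp hlen1
  subst hw
  simp only [List.map_cons, List.map_nil, List.prod_cons, List.prod_nil, mul_one] at hl
  -- trace argument
  have htr : Matrix.trace ((ρ (σ₂⁻¹ * σ₁⁻¹ * σ₂ ^ 2 * σ₁ * (σ₂ ^ β)⁻¹ * σ₁⁻¹ * σ₂ *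
      (σ₁ ^ α)⁻¹ * Δ₃ ^ 2) : M2ˣ) : M2) = 2 := by
    rw [hl, map_mul, _root_.map_mul, map_inv]
    rw [show σ 0 = σ₁ from rfl, ρσ₁]
    rw [Units.val_mul, Units.val_mul]
    rw [Matrix.trace_units_conj]
    decide
  have htr' : Matrix.trace ((ρ (σ₂⁻¹ * σ₁⁻¹ * σ₂ ^ 2 * σ₁ * (σ₂ ^ β)⁻¹ * σ₁⁻¹ * σ₂ *
      (σ₁ ^ α)⁻¹ * Δ₃ ^ 2) : M2ˣ) : M2) ≠ 2 := by
    rcases hmem with h | h | h | h | h <;>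
      · simp only [Set.mem_singleton_iff, Prod.mk.injEq] at h
        obtain ⟨rfl, rfl⟩ := h
        simp only [Δ₃, _root_.map_mul, map_inv, map_pow, ρσ₁, ρσ₂]
        decide
  exact htr' htr
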